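/- arXiv:1901.05797 — 2 statements merged into one kernel-verified Lean document; each statement's English description precedes it below -/
import Mathlib

section
/- Let Z ∈ {0,1}^{n×m} and k ∈ ℕ. Then Z = X^T∘Y for some cyclic binary matrices X ∈ {0,1}^{k×n} and Y ∈ {0,1}^{k×m} if and only if there exist permutations σ of {1,…,n} and τ of {1,…,m} and cyclic intervals I_1,…,I_k of {1,…,n} and J_1,…,J_k of {1,…,m} such that the permuted matrix Z′ defined by z′_{ij} = z_{σ(i)τ(j)} satisfies: z′_{ij} = 1 exactly when (i,j) ∈ ⋃_{ℓ=1}^k I_ℓ × J_ℓ. That is, Z has such a factorization exactly when its rows and columns can be permuted so that its 1s form a union of k contiguous rectangular tiles, where the tiles are additionally allowed to wrap around the borders of the matrix. -/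
/-!
The tiles and the factors determine each other: row `ℓ` of `X`, read through the column
permutation that makes `X` cyclic, is the cyclic interval `I ℓ`, and likewise for `Y` and `J ℓ`.
The Boolean product then has a `1` at `(σ i, τ j)` exactly when some tile `I ℓ × J ℓ`
contains `(i, j)`.
-/

/-- The Boolean matrix product `X^T ∘ Y` of `X ∈ {0,1}^{k×n}` and `Y ∈ {0,1}^{k×m}`:
`(X^T ∘ Y)_{ij} = ⋁_ℓ x_{ℓi} ∧ y_{ℓj}`. -/
def boolProdT {k n m : ℕ} (X : Matrix (Fin k) (Fin n) Bool) (Y : Matrix (Fin k) (Fin m) Bool) :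
    Matrix (Fin n) (Fin m) Bool :=
  Matrix.of fun i j => decide (∃ ℓ : Fin k, X ℓ i = true ∧ Y ℓ j = true)

/-- A set of indices is an interval if it consists of consecutive positions
`{a, a+1, …, b}` (possibly empty). -/
def IsIntervalSet {n : ℕ} (I : Set (Fin n)) : Prop :=
  ∃ a b : ℕ, ∀ i : Fin n, i ∈ I ↔ (a ≤ (i : ℕ) ∧ (i : ℕ) ≤ b)

/-- A set of indices is a cyclic interval if it consists of positions that are consecutive
modulo `n`, i.e. it is an interval or the complement of an interval. -/
def IsCyclicIntervalSet {n : ℕ} (I : Set (Fin n)) : Prop :=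
  IsIntervalSet I ∨ IsIntervalSet Iᶜ

/-- A binary matrix is cyclic if its columns can be permuted so that in every row the 1s
have the form `[0,…,0,1,…,1,0,…,0]` or `[1,…,1,0,…,0,1,…,1]`, i.e. the 1s of every row
occupy a set of positions consecutive modulo the number of columns. -/
def IsCyclicMat {k n : ℕ} (X : Matrix (Fin k) (Fin n) Bool) : Prop :=
  ∃ σ : Equiv.Perm (Fin n), ∀ ℓ : Fin k,
    IsCyclicIntervalSet {i : Fin n | X ℓ (σ i) = true}

@[simp]
theorem boolProdT_apply_eq_true {k n m : ℕ} (X : Matrix (Fin k) (Fin n) Bool)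
    (Y : Matrix (Fin k) (Fin m) Bool) (i : Fin n) (j : Fin m) :
    boolProdT X Y i j = true ↔ ∃ ℓ, X ℓ i = true ∧ Y ℓ j = true := by
  simp [boolProdT]

open Classical in
noncomputable def indicatorMatrix {k n : ℕ} (σ : Equiv.Perm (Fin n)) (I : Fin k → Set (Fin n)) :
    Matrix (Fin k) (Fin n) Bool :=
  Matrix.of fun ℓ i => decide (σ.symm i ∈ I ℓ)

@[simp]
theorem indicatorMatrix_apply_perm_eq_true {k n : ℕ} (σ : Equiv.Perm (Fin n))
    (I : Fin k → Set (Fin n)) (ℓ : Fin k) (i : Fin n) :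
    indicatorMatrix σ I ℓ (σ i) = true ↔ i ∈ I ℓ := by
  simp [indicatorMatrix]

theorem isCyclicMat_indicatorMatrix {k n : ℕ} (σ : Equiv.Perm (Fin n))
    {I : Fin k → Set (Fin n)} (hI : ∀ ℓ, IsCyclicIntervalSet (I ℓ)) :
    IsCyclicMat (indicatorMatrix σ I) :=
  ⟨σ, fun ℓ => by simpa using hI ℓ⟩

/-- `Z = X^T ∘ Y` for some cyclic binary matrices `X ∈ {0,1}^{k×n}`,
`Y ∈ {0,1}^{k×m}` iff the rows and columns of `Z` can be permuted so that its 1s form a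
union of `k` contiguous rectangular tiles `I_ℓ × J_ℓ` that may wrap around the borders. -/
theorem cobmf_factorization_iff_cyclic_tiles {n m k : ℕ} (Z : Matrix (Fin n) (Fin m) Bool) :
    (∃ (X : Matrix (Fin k) (Fin n) Bool) (Y : Matrix (Fin k) (Fin m) Bool),
        IsCyclicMat X ∧ IsCyclicMat Y ∧ Z = boolProdT X Y) ↔
      (∃ (σ : Equiv.Perm (Fin n)) (τ : Equiv.Perm (Fin m))
          (I : Fin k → Set (Fin n)) (J : Fin k → Set (Fin m)),
        (∀ ℓ, IsCyclicIntervalSet (I ℓ)) ∧ (∀ ℓ, IsCyclicIntervalSet (J ℓ)) ∧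
        ∀ (i : Fin n) (j : Fin m),
          Z (σ i) (τ j) = true ↔ ∃ ℓ : Fin k, i ∈ I ℓ ∧ j ∈ J ℓ) := by
  constructor
  · rintro ⟨X, Y, ⟨σ, hX⟩, ⟨τ, hY⟩, rfl⟩
    exact ⟨σ, τ, fun ℓ => {i | X ℓ (σ i) = true}, fun ℓ => {j | Y ℓ (τ j) = true},
      hX, hY, fun i j => boolProdT_apply_eq_true ..⟩
  · rintro ⟨σ, τ, I, J, hI, hJ, hZ⟩
    refine ⟨indicatorMatrix σ I, indicatorMatrix τ J, isCyclicMat_indicatorMatrix σ hI,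
      isCyclicMat_indicatorMatrix τ hJ, ?_⟩
    ext i j
    obtain ⟨i, rfl⟩ := σ.surjective i
    obtain ⟨j, rfl⟩ := τ.surjective j
    rw [Bool.eq_iff_iff, hZ, boolProdT_apply_eq_true]
    simp only [indicatorMatrix_apply_perm_eq_true]
end

section
/- Let T be a pq-tree over a finite set U with weights w : U → ℤ, and let v be a q-node of T with children c_1, …, c_ℓ (ℓ ≥ 2) in their given order. Then inner(v) = max(x, y), where x = max_{1 ≤ i ≤ ℓ} inner(c_i) and y = max_{1 ≤ i < j ≤ ℓ} ( border(c_i) + border(c_j) + Σ_{ℓ′ = i+1}^{j−1} total(c_{ℓ′}) ). -/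
/-- A pq-tree: leaves carry elements of `U`; the children of each internal node
(a p-node or a q-node) are given as a sequence. -/
inductive PQTree (U : Type) : Type where
  | leaf : U → PQTree U
  | pnode : List (PQTree U) → PQTree U
  | qnode : List (PQTree U) → PQTree U

namespace PQTree

variable {U : Type}

/-- The list of leaves below a node, read left to right in the given order. -/
def leaves : PQTree U → List U
  | leaf u => [u]
  | pnode cs => cs.attach.flatMap (fun c => leaves c.1)
  | qnode cs => cs.attach.flatMap (fun c => leaves c.1)
  decreasing_by
  · have := List.sizeOf_lt_of_mem c.2; simp; omega
  · have := List.sizeOf_lt_of_mem c.2; simp; omega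

/-- `total(v) = Σ_{u ∈ leaves(v)} w(u)`. -/
def total (w : U → ℤ) (t : PQTree U) : ℤ :=
  ((leaves t).map w).sum

/-- `IsFrontier t l` holds when `l` is a frontier order of the pq-tree `t`: a linear order
of its leaves obtained by reading the leaves left to right after independently permuting
the children sequence of each p-node arbitrarily and either keeping or reversing the
children sequence of each q-node. -/
inductive IsFrontier : PQTree U → List U → Prop where
  | leaf (u : U) : IsFrontier (leaf u) [u]
  | pnode (cs cs' : List (PQTree U)) (fs : List (List U)) :
      cs'.Perm cs → List.Forall₂ IsFrontier cs' fs →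
      IsFrontier (pnode cs) fs.flatten
  | qnodeKeep (cs : List (PQTree U)) (fs : List (List U)) :
      List.Forall₂ IsFrontier cs fs →
      IsFrontier (qnode cs) fs.flatten
  | qnodeRev (cs : List (PQTree U)) (fs : List (List U)) :
      List.Forall₂ IsFrontier cs.reverse fs →
      IsFrontier (qnode cs) fs.flatten

variable [DecidableEq U]

/-- `S` is compatible with the pq-tree `t`: some frontier order of `t` has a contiguous
segment whose elements are exactly `S` (in particular `S = ∅` is compatible). -/
def Compatible (S : Finset U) (t : PQTree U) : Prop :=
  ∃ l l₁ l₂ l₃ : List U, IsFrontier t l ∧ l = l₁ ++ l₂ ++ l₃ ∧ l₂.toFinset = S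

/-- `S` is border-compatible with the pq-tree `t`: `S` is nonempty and in some frontier
order of `t` the elements of `S` occupy a set of consecutive positions containing the
first or the last position, i.e. `S` is a prefix or a suffix of the frontier. -/
def BorderCompatible (S : Finset U) (t : PQTree U) : Prop :=
  S.Nonempty ∧ ∃ l l₁ l₂ : List U, IsFrontier t l ∧ l = l₁ ++ l₂ ∧
    (l₁.toFinset = S ∨ l₂.toFinset = S)

/-- `inner(v)`: the maximum of `Σ_{u∈S} w(u)` over all sets `S` compatible with the
subtree at `v` (including `S = ∅`, so `inner(v) ≥ 0`). -/
noncomputable def inner (w : U → ℤ) (t : PQTree U) : ℤ :=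
  sSup {z : ℤ | ∃ S : Finset U, Compatible S t ∧ z = ∑ u ∈ S, w u}

/-- `border(v)`: the maximum of `Σ_{u∈S} w(u)` over all (nonempty) sets `S`
border-compatible with the subtree at `v`. -/
noncomputable def border (w : U → ℤ) (t : PQTree U) : ℤ :=
  sSup {z : ℤ | ∃ S : Finset U, BorderCompatible S t ∧ z = ∑ u ∈ S, w u}

/-- A well-formed pq-tree: every internal node has a nonempty sequence of children
(so every subtree has at least one leaf). -/
inductive Proper : PQTree U → Prop where
  | leaf (u : U) : Proper (leaf u)
  | pnode (cs : List (PQTree U)) : cs ≠ [] → (∀ c ∈ cs, Proper c) → Proper (pnode cs)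
  | qnode (cs : List (PQTree U)) : cs ≠ [] → (∀ c ∈ cs, Proper c) → Proper (qnode cs)

end PQTree

/-!
Every frontier of the q-node is the concatenation of frontiers of its children, read in the
given or in the reversed order, and reversing a frontier does not change which sets are
compatible. A nonempty contiguous segment of such a concatenation either lies inside the
frontier of a single child `c_i`, and is then bounded by `inner(c_i)`, or it consists of a
nonempty suffix of the frontier of `c_i`, the whole frontiers of `c_{i+1}, …, c_{j-1}`, and a
nonempty prefix of the frontier of `c_j`; since the leaves are distinct, its weight is then at
most `border(c_i) + border(c_j) + Σ total(c_t)`. Conversely, reversing the frontiers of `c_i`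
and `c_j` as needed, optimal border sets can be placed at the end of `c_i` and at the start of
`c_j`, and together with the children in between they form a compatible set of the q-node.
-/

namespace List

variable {α β : Type*}

theorem forall₂_ofFn {R : α → β → Prop} {n : ℕ} {a : Fin n → α} {b : Fin n → β}
    (h : ∀ k, R (a k) (b k)) : Forall₂ R (ofFn a) (ofFn b) :=
  forall₂_iff_get.mpr ⟨by simp, fun k _ _ => by simpa using h _⟩

theorem Forall₂.exists_eq_ofFn {R : α → β → Prop} {n : ℕ} {a : Fin n → α} {l : List β}
    (h : Forall₂ R (ofFn a) l) : ∃ b : Fin n → β, l = ofFn b ∧ ∀ k, R (a k) (b k) := by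
  have hl : l.length = n := by simpa using h.length_eq.symm
  refine ⟨fun k => l[k], by subst hl; exact ofFn_getElem.symm, fun k => ?_⟩
  simpa using forall₂_iff_get.mp h |>.2 k (by simp) (by omega)

theorem Forall₂.imp_of_mem {R S : α → β → Prop} {l₁ : List α} {l₂ : List β}
    (h : Forall₂ R l₁ l₂) (H : ∀ a ∈ l₁, ∀ b, R a b → S a b) : Forall₂ S l₁ l₂ :=
  ((forall₂_and_left _ _).mpr ⟨fun _ ha => ha, h⟩).imp fun a b hab => H a hab.1 b hab.2

theorem Forall₂.flatten_perm_flatMap {g : α → List β} {l₁ : List α} {l₂ : List (List β)}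
    (h : Forall₂ (fun a b => b.Perm (g a)) l₁ l₂) : l₂.flatten.Perm (l₁.flatMap g) := by
  induction h with
  | nil => simp
  | cons h _ ih => simpa using h.append ih

theorem exists_forall₂_of_forall_mem {R : α → β → Prop} :
    ∀ {l : List α}, (∀ a ∈ l, ∃ b, R a b) → ∃ l' : List β, Forall₂ R l l'
  | [], _ => ⟨[], .nil⟩
  | a :: l, h => by
    obtain ⟨b, hb⟩ := h a mem_cons_self
    obtain ⟨l', hl'⟩ := exists_forall₂_of_forall_mem fun x hx => h x (mem_cons_of_mem a hx)
    exact ⟨b :: l', .cons hb hl'⟩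

theorem IsPrefix.exists_eq_flatten_take_append :
    ∀ {L : List (List α)} {m : List α}, m <+: L.flatten → m ≠ [] →
      ∃ j, ∃ hj : j < L.length, ∃ p, p ≠ [] ∧ p <+: L[j] ∧ m = (L.take j).flatten ++ p
  | [], m, hm, hne => absurd (prefix_nil.mp hm) hne
  | b :: L, m, ⟨r, hr⟩, hne => by
    rw [flatten_cons] at hr
    rcases append_eq_append_iff.mp hr with ⟨a, hb, -⟩ | ⟨a, rfl, hL⟩
    · exact ⟨0, by simp, m, hne, ⟨a, hb.symm⟩, by simp⟩
    · rcases eq_or_ne a [] with rfl | ha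
      · exact ⟨0, by simp, b, by simpa using hne, prefix_rfl, by simp⟩
      obtain ⟨j, hj, p, hp, hpL, rfl⟩ :=
        IsPrefix.exists_eq_flatten_take_append ⟨r, hL.symm⟩ ha
      exact ⟨j + 1, by simpa using hj, p, hp, by simpa using hpL, by simp⟩

theorem IsInfix.flatten_cases :
    ∀ {L : List (List α)} {m : List α}, m <:+: L.flatten → m ≠ [] →
      (∃ i, ∃ hi : i < L.length, m <:+: L[i]) ∨
      ∃ i j, ∃ hij : i < j, ∃ hj : j < L.length, ∃ s p, s ≠ [] ∧ p ≠ [] ∧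
        s <:+ L[i]'(hij.trans hj) ∧ p <+: L[j] ∧
        m = s ++ ((L.take j).drop (i + 1)).flatten ++ p
  | [], m, hm, hne => absurd (eq_nil_of_infix_nil hm) hne
  | b :: L, m, hm, hne => by
    rw [flatten_cons] at hm
    rcases infix_append_iff_ne_nil.mp hm with hb | hL | ⟨s, r, hs, hr, rfl, hsb, hrL⟩
    · exact .inl ⟨0, by simp, hb⟩
    · rcases IsInfix.flatten_cases hL hne with
        ⟨i, hi, h⟩ | ⟨i, j, hij, hj, s, p, hs, hp, hsL, hpL, rfl⟩
      · exact .inl ⟨i + 1, by simpa using hi, by simpa using h⟩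
      · exact .inr ⟨i + 1, j + 1, by omega, by simpa using hj, s, p, hs, hp, by simpa using hsL,
          by simpa using hpL, by simp⟩
    · obtain ⟨j, hj, p, hp, hpL, rfl⟩ := IsPrefix.exists_eq_flatten_take_append hrL hr
      exact .inr ⟨0, j + 1, by omega, by simpa using hj, s, p, hs, hp, by simpa using hsb,
        by simpa using hpL, by simp⟩

theorem sum_drop_take_ofFn {M : Type*} [AddCommGroup M] {n : ℕ} (g : Fin n → M) {i j : Fin n}
    (hij : i < j) : (((ofFn g).take j).drop (i + 1)).sum = ∑ t ∈ Finset.Ioo i j, g t := by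
  have hsplit := congrArg List.sum (take_append_drop (i + 1) ((ofFn g).take j))
  rw [take_take, min_eq_left (by omega : (i : ℕ) + 1 ≤ j), sum_append, sum_take_ofFn,
    sum_take_ofFn] at hsplit
  rw [eq_sub_of_add_eq' hsplit, sub_eq_iff_eq_add', ← Finset.sum_union]
  · congr 1
    ext t
    simp only [Finset.mem_union, Finset.mem_filter, Finset.mem_univ, Finset.mem_Ioo, Fin.lt_def,
      true_and]
    omega
  · simp only [Finset.disjoint_left, Finset.mem_filter, Finset.mem_univ, Finset.mem_Ioo,
      Fin.lt_def, true_and]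
    omega

theorem flatten_take_append_prefix_flatten :
    ∀ {L : List (List α)} {j : ℕ} (hj : j < L.length) {p : List α}, p <+: L[j] →
      (L.take j).flatten ++ p <+: L.flatten
  | b :: L, 0, _, p, hp => by simpa using hp.trans (prefix_append b L.flatten)
  | b :: L, j + 1, hj, p, hp => by
    simpa using flatten_take_append_prefix_flatten (L := L) (Nat.lt_of_succ_lt_succ hj) hp

theorem infix_flatten_of_suffix_of_prefix :
    ∀ {L : List (List α)} {i j : ℕ} (hij : i < j) (hj : j < L.length) {s p : List α},
      s <:+ L[i] → p <+: L[j] → s ++ ((L.take j).drop (i + 1)).flatten ++ p <:+: L.flatten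
  | b :: L, 0, j + 1, _, hj, s, p, hs, hp => by
    simp only [zero_add, take_succ_cons, drop_succ_cons, drop_zero, flatten_cons, append_assoc]
    refine infix_append_iff.mpr (.inr (.inr ⟨s, _, rfl, hs, ?_⟩))
    simpa using flatten_take_append_prefix_flatten (L := L) (Nat.lt_of_succ_lt_succ hj) hp
  | b :: L, i + 1, j + 1, hij, hj, s, p, hs, hp => by
    rw [flatten_cons]
    refine infix_append_of_infix_right ?_
    simpa using infix_flatten_of_suffix_of_prefix (L := L) (Nat.lt_of_succ_lt_succ hij)
      (Nat.lt_of_succ_lt_succ hj) hs hp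

end List

theorem bddAbove_sum_of_subset {α : Type*} {P : Finset α → Prop} {s : Finset α}
    (h : ∀ S, P S → S ⊆ s) (w : α → ℤ) : BddAbove {z : ℤ | ∃ S, P S ∧ z = ∑ u ∈ S, w u} :=
  (s.powerset.image fun S => ∑ u ∈ S, w u).bddAbove.mono <| by
    rintro _ ⟨S, hS, rfl⟩
    exact Finset.mem_coe.mpr (Finset.mem_image_of_mem _ (Finset.mem_powerset.mpr (h S hS)))

namespace PQTree

variable {U : Type}

@[induction_eliminator]
theorem induction {P : PQTree U → Prop} (leaf : ∀ u, P (leaf u))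
    (pnode : ∀ cs, (∀ c ∈ cs, P c) → P (pnode cs))
    (qnode : ∀ cs, (∀ c ∈ cs, P c) → P (qnode cs)) : ∀ t, P t
  | .leaf u => leaf u
  | .pnode cs => pnode cs fun c _ => induction leaf pnode qnode c
  | .qnode cs => qnode cs fun c _ => induction leaf pnode qnode c

theorem leaves_pnode (cs : List (PQTree U)) : leaves (pnode cs) = cs.flatMap leaves := by
  rw [leaves]; simp [List.flatMap]

theorem leaves_qnode (cs : List (PQTree U)) : leaves (qnode cs) = cs.flatMap leaves := by
  rw [leaves]; simp [List.flatMap]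

theorem IsFrontier.perm {t : PQTree U} {l : List U} (h : IsFrontier t l) : l.Perm (leaves t) := by
  induction t generalizing l with
  | leaf u => cases h; simp [leaves]
  | pnode cs ih =>
    cases h with
    | pnode _ cs' fs hcs hfs =>
      rw [leaves_pnode]
      exact (hfs.imp_of_mem fun c hc _ => ih c (hcs.subset hc)).flatten_perm_flatMap.trans
        (hcs.flatMap_right leaves)
  | qnode cs ih =>
    rw [leaves_qnode]
    cases h with
    | qnodeKeep _ fs hfs => exact (hfs.imp_of_mem fun c hc _ => ih c hc).flatten_perm_flatMap
    | qnodeRev _ fs hfs =>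
      exact (hfs.imp_of_mem fun c hc _ => ih c (List.mem_reverse.mp hc)).flatten_perm_flatMap.trans
        (cs.reverse_perm.flatMap_right leaves)

theorem IsFrontier.reverse {t : PQTree U} {l : List U} (h : IsFrontier t l) :
    IsFrontier t l.reverse := by
  induction t generalizing l with
  | leaf u => cases h; exact .leaf u
  | pnode cs ih =>
    cases h with
    | pnode _ cs' fs hcs hfs =>
      rw [List.reverse_flatten]
      refine .pnode cs cs'.reverse _ (cs'.reverse_perm.trans hcs) ?_
      rw [List.forall₂_reverse_iff, List.forall₂_map_right_iff]
      exact hfs.imp_of_mem fun c hc _ => ih c (hcs.subset hc)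
  | qnode cs ih =>
    cases h with
    | qnodeKeep _ fs hfs =>
      rw [List.reverse_flatten]
      refine .qnodeRev cs _ ?_
      rw [List.forall₂_reverse_iff, List.forall₂_map_right_iff]
      exact hfs.imp_of_mem fun c hc _ => ih c hc
    | qnodeRev _ fs hfs =>
      rw [List.reverse_flatten]
      refine .qnodeKeep cs _ ?_
      rw [← List.forall₂_reverse_iff, List.reverse_reverse, List.forall₂_map_right_iff]
      exact hfs.imp_of_mem fun c hc _ => ih c (List.mem_reverse.mp hc)

theorem exists_isFrontier (t : PQTree U) : ∃ l, IsFrontier t l := by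
  induction t with
  | leaf u => exact ⟨_, .leaf u⟩
  | pnode cs ih =>
    obtain ⟨fs, hfs⟩ := List.exists_forall₂_of_forall_mem ih
    exact ⟨_, .pnode cs cs fs (.refl cs) hfs⟩
  | qnode cs ih =>
    obtain ⟨fs, hfs⟩ := List.exists_forall₂_of_forall_mem ih
    exact ⟨_, .qnodeKeep cs fs hfs⟩

theorem leaves_ne_nil {t : PQTree U} (h : Proper t) : leaves t ≠ [] := by
  induction t with
  | leaf u => simp [leaves]
  | pnode cs ih =>
    cases h with
    | pnode _ hne hcs =>
      obtain ⟨c, hc⟩ := List.exists_mem_of_ne_nil cs hne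
      rw [leaves_pnode, Ne, List.flatMap_eq_nil_iff]
      exact fun h => ih c hc (hcs c hc) (h c hc)
  | qnode cs ih =>
    cases h with
    | qnode _ hne hcs =>
      obtain ⟨c, hc⟩ := List.exists_mem_of_ne_nil cs hne
      rw [leaves_qnode, Ne, List.flatMap_eq_nil_iff]
      exact fun h => ih c hc (hcs c hc) (h c hc)

theorem IsFrontier.ne_nil {t : PQTree U} {l : List U} (h : IsFrontier t l) (hp : Proper t) :
    l ≠ [] := by
  rintro rfl
  exact leaves_ne_nil hp h.perm.nil_eq.symm

theorem IsFrontier.sum_map_eq_total {t : PQTree U} {l : List U} (h : IsFrontier t l)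
    (w : U → ℤ) : (l.map w).sum = total w t :=
  (h.perm.map w).sum_eq

section Weights

variable [DecidableEq U] {t : PQTree U} {S : Finset U}

theorem compatible_iff :
    Compatible S t ↔ ∃ l m, IsFrontier t l ∧ m <:+: l ∧ m.toFinset = S := by
  constructor
  · rintro ⟨l, l₁, m, l₃, hl, rfl, hS⟩
    exact ⟨_, m, hl, ⟨l₁, l₃, rfl⟩, hS⟩
  · rintro ⟨l, m, hl, ⟨l₁, l₃, rfl⟩, hS⟩
    exact ⟨_, l₁, m, l₃, hl, rfl, hS⟩

theorem compatible_empty (t : PQTree U) : Compatible ∅ t := by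
  obtain ⟨l, hl⟩ := exists_isFrontier t
  exact compatible_iff.mpr ⟨l, [], hl, List.nil_infix, rfl⟩

theorem BorderCompatible.exists_suffix (h : BorderCompatible S t) :
    ∃ l s, IsFrontier t l ∧ s <:+ l ∧ s.toFinset = S := by
  obtain ⟨-, l, l₁, l₂, hl, rfl, hS | hS⟩ := h
  · exact ⟨_, l₁.reverse, hl.reverse, by simp, by simpa using hS⟩
  · exact ⟨_, l₂, hl, List.suffix_append l₁ l₂, hS⟩

theorem BorderCompatible.exists_prefix (h : BorderCompatible S t) :
    ∃ l p, IsFrontier t l ∧ p <+: l ∧ p.toFinset = S := by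
  obtain ⟨l, s, hl, hs, hS⟩ := h.exists_suffix
  exact ⟨_, s.reverse, hl.reverse, List.reverse_prefix.mpr hs, by simpa using hS⟩

theorem borderCompatible_of_suffix {l s : List U} (hl : IsFrontier t l) (hs : s <:+ l)
    (hne : s ≠ []) : BorderCompatible s.toFinset t := by
  obtain ⟨l₁, rfl⟩ := hs
  exact ⟨by simpa using hne, _, l₁, s, hl, rfl, .inr rfl⟩

theorem borderCompatible_of_prefix {l p : List U} (hl : IsFrontier t l) (hp : p <+: l)
    (hne : p ≠ []) : BorderCompatible p.toFinset t := by
  obtain ⟨l₂, rfl⟩ := hp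
  exact ⟨by simpa using hne, _, p, l₂, hl, rfl, .inl rfl⟩

theorem IsFrontier.toFinset_subset_leaves {l m : List U} (hl : IsFrontier t l) (hm : m ⊆ l) :
    m.toFinset ⊆ (leaves t).toFinset := fun u hu => by
  simpa using hl.perm.subset (hm (List.mem_toFinset.mp hu))

theorem Compatible.subset_leaves (h : Compatible S t) : S ⊆ (leaves t).toFinset := by
  obtain ⟨l, m, hl, hm, rfl⟩ := compatible_iff.mp h
  exact hl.toFinset_subset_leaves hm.subset

theorem BorderCompatible.subset_leaves (h : BorderCompatible S t) :
    S ⊆ (leaves t).toFinset := by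
  obtain ⟨l, s, hl, hs, rfl⟩ := h.exists_suffix
  exact hl.toFinset_subset_leaves hs.subset

variable (w : U → ℤ)

theorem le_inner (h : Compatible S t) : ∑ u ∈ S, w u ≤ inner w t :=
  le_csSup (bddAbove_sum_of_subset (fun _ => Compatible.subset_leaves) w) ⟨S, h, rfl⟩

theorem inner_le {a : ℤ} (h : ∀ S, Compatible S t → ∑ u ∈ S, w u ≤ a) : inner w t ≤ a :=
  csSup_le ⟨0, ∅, compatible_empty t, rfl⟩ fun _ ⟨S, hS, hz⟩ => hz ▸ h S hS

theorem inner_nonneg : 0 ≤ inner w t := by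
  simpa using le_inner w (compatible_empty t)

theorem le_border (h : BorderCompatible S t) : ∑ u ∈ S, w u ≤ border w t :=
  le_csSup (bddAbove_sum_of_subset (fun _ => BorderCompatible.subset_leaves) w) ⟨S, h, rfl⟩

theorem exists_borderCompatible_sum_eq_border (hp : Proper t) :
    ∃ S, BorderCompatible S t ∧ ∑ u ∈ S, w u = border w t := by
  obtain ⟨l, hl⟩ := exists_isFrontier t
  have hne := borderCompatible_of_suffix hl List.suffix_rfl (hl.ne_nil hp)
  obtain ⟨S, hS, hw⟩ := Int.csSup_mem
    (s := {z : ℤ | ∃ S, BorderCompatible S t ∧ z = ∑ u ∈ S, w u}) ⟨_, _, hne, rfl⟩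
    (bddAbove_sum_of_subset (fun _ => BorderCompatible.subset_leaves) w)
  exact ⟨S, hS, hw.symm⟩

end Weights

section QNode

variable {ℓ : ℕ} {c : Fin ℓ → PQTree U}

theorem isFrontier_qnode_ofFn {f : Fin ℓ → List U} (hf : ∀ k, IsFrontier (c k) (f k)) :
    IsFrontier (qnode (List.ofFn c)) (List.ofFn f).flatten :=
  .qnodeKeep _ _ (List.forall₂_ofFn hf)

theorem nodup_flatten_ofFn_of_isFrontier {f : Fin ℓ → List U}
    (hf : ∀ k, IsFrontier (c k) (f k)) (hnd : (leaves (qnode (List.ofFn c))).Nodup) :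
    (List.ofFn f).flatten.Nodup :=
  (isFrontier_qnode_ofFn hf).perm.nodup_iff.mpr hnd

theorem Proper.of_qnode_ofFn (hp : Proper (PQTree.qnode (List.ofFn c))) (k : Fin ℓ) :
    Proper (c k) := by
  cases hp with
  | qnode _ _ hcs => exact hcs (c k) (List.mem_ofFn.mpr ⟨k, rfl⟩)

theorem isFrontier_update {f : Fin ℓ → List U} (hf : ∀ k, IsFrontier (c k) (f k)) {i : Fin ℓ}
    {l : List U} (hl : IsFrontier (c i) l) (k : Fin ℓ) :
    IsFrontier (c k) (Function.update f i l k) := by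
  rcases eq_or_ne k i with rfl | hk
  · simpa using hl
  · simpa [hk] using hf k

theorem IsFrontier.exists_of_qnode_ofFn {l : List U} (h : IsFrontier (qnode (List.ofFn c)) l) :
    ∃ f : Fin ℓ → List U, (∀ k, IsFrontier (c k) (f k)) ∧
      (l = (List.ofFn f).flatten ∨ l = (List.ofFn f).flatten.reverse) := by
  cases h with
  | qnodeKeep _ fs hfs =>
    obtain ⟨f, rfl, hf⟩ := hfs.exists_eq_ofFn
    exact ⟨f, hf, .inl rfl⟩
  | qnodeRev _ fs hfs =>
    rw [← List.forall₂_reverse_iff, List.reverse_reverse] at hfs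
    obtain ⟨f, hfs, hf⟩ := hfs.exists_eq_ofFn
    refine ⟨fun k => (f k).reverse, fun k => (hf k).reverse, .inr ?_⟩
    rw [← List.reverse_inj, List.reverse_reverse, List.reverse_flatten, ← List.map_reverse, hfs,
      List.map_ofFn]
    rfl

end QNode

section QNodeWeights

variable [DecidableEq U] {ℓ : ℕ} {c : Fin ℓ → PQTree U} {S : Finset U}

theorem Compatible.exists_infix_flatten_of_qnode_ofFn (h : Compatible S (qnode (List.ofFn c))) :
    ∃ f : Fin ℓ → List U, (∀ k, IsFrontier (c k) (f k)) ∧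
      ∃ m, m <:+: (List.ofFn f).flatten ∧ m.toFinset = S := by
  obtain ⟨l, m, hl, hm, rfl⟩ := compatible_iff.mp h
  obtain ⟨f, hf, rfl | rfl⟩ := hl.exists_of_qnode_ofFn
  · exact ⟨f, hf, m, hm, rfl⟩
  · exact ⟨f, hf, m.reverse, List.reverse_infix.mp (by simpa using hm), by simp⟩

theorem Compatible.qnode_ofFn {i : Fin ℓ} (h : Compatible S (c i)) :
    Compatible S (qnode (List.ofFn c)) := by
  obtain ⟨l, m, hl, hm, rfl⟩ := compatible_iff.mp h
  choose f hf using fun k => exists_isFrontier (c k)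
  refine compatible_iff.mpr ⟨_, m, isFrontier_qnode_ofFn (isFrontier_update hf hl),
    hm.trans (List.infix_of_mem_flatten ?_), rfl⟩
  exact List.mem_ofFn.mpr ⟨i, by simp⟩

theorem sum_toFinset_append_between_append (w : U → ℤ) {f : Fin ℓ → List U}
    (hf : ∀ k, IsFrontier (c k) (f k))
    {i j : Fin ℓ} (hij : i < j) {s p : List U}
    (hnd : (s ++ (((List.ofFn f).take j).drop (i + 1)).flatten ++ p).Nodup) :
    ∑ u ∈ (s ++ (((List.ofFn f).take j).drop (i + 1)).flatten ++ p).toFinset, w u =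
      ∑ u ∈ s.toFinset, w u + ∑ u ∈ p.toFinset, w u + ∑ t ∈ Finset.Ioo i j, total w (c t) := by
  rw [List.sum_toFinset _ hnd, List.sum_toFinset _ hnd.of_append_left.of_append_left,
    List.sum_toFinset _ hnd.of_append_right, List.map_append, List.map_append, List.sum_append,
    List.sum_append, List.map_flatten, List.sum_flatten]
  simp only [List.map_drop, List.map_take, List.map_ofFn, Function.comp_def,
    (hf _).sum_map_eq_total]
  rw [List.sum_drop_take_ofFn _ hij]
  ring

theorem Compatible.qnode_ofFn_cases (w : U → ℤ) (hnd : (leaves (qnode (List.ofFn c))).Nodup)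
    (h : Compatible S (qnode (List.ofFn c))) :
    S = ∅ ∨ (∃ i, Compatible S (c i)) ∨
      ∃ i j, i < j ∧ ∃ Si Sj, BorderCompatible Si (c i) ∧ BorderCompatible Sj (c j) ∧
        ∑ u ∈ S, w u = ∑ u ∈ Si, w u + ∑ u ∈ Sj, w u + ∑ t ∈ Finset.Ioo i j, total w (c t) := by
  obtain ⟨f, hf, m, hm, rfl⟩ := h.exists_infix_flatten_of_qnode_ofFn
  rcases eq_or_ne m [] with rfl | hne
  · exact .inl rfl
  rcases hm.flatten_cases hne with
    ⟨i, hi, hmi⟩ | ⟨i, j, hij, hj, s, p, hs, hp, hsi, hpj, rfl⟩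
  · rw [List.length_ofFn] at hi
    exact .inr (.inl ⟨⟨i, hi⟩, compatible_iff.mpr ⟨_, m, hf _, by simpa using hmi, rfl⟩⟩)
  · rw [List.length_ofFn] at hj
    let i' : Fin ℓ := ⟨i, hij.trans hj⟩
    let j' : Fin ℓ := ⟨j, hj⟩
    have hsum := sum_toFinset_append_between_append w hf (show i' < j' from hij)
      (hm.nodup (nodup_flatten_ofFn_of_isFrontier hf hnd))
    exact .inr (.inr ⟨i', j', hij, _, _,
      borderCompatible_of_suffix (hf i') (by simpa using hsi) hs,
      borderCompatible_of_prefix (hf j') (by simpa using hpj) hp, hsum⟩)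

theorem exists_compatible_qnode_ofFn_sum_eq (w : U → ℤ)
    (hnd : (leaves (qnode (List.ofFn c))).Nodup) {i j : Fin ℓ} (hij : i < j) {Si Sj : Finset U}
    (hi : BorderCompatible Si (c i)) (hj : BorderCompatible Sj (c j)) :
    ∃ S, Compatible S (qnode (List.ofFn c)) ∧
      ∑ u ∈ S, w u = ∑ u ∈ Si, w u + ∑ u ∈ Sj, w u + ∑ t ∈ Finset.Ioo i j, total w (c t) := by
  obtain ⟨li, s, hli, hs, rfl⟩ := hi.exists_suffix
  obtain ⟨lj, p, hlj, hp, rfl⟩ := hj.exists_prefix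
  choose f₀ hf₀ using fun k => exists_isFrontier (c k)
  obtain ⟨f, hf, hfi, hfj⟩ : ∃ f : Fin ℓ → List U,
      (∀ k, IsFrontier (c k) (f k)) ∧ f i = li ∧ f j = lj :=
    ⟨_, isFrontier_update (isFrontier_update hf₀ hli) hlj, by simp [hij.ne], by simp⟩
  have hm : s ++ (((List.ofFn f).take j).drop (i + 1)).flatten ++ p <:+: (List.ofFn f).flatten :=
    List.infix_flatten_of_suffix_of_prefix hij (by simp) (by simpa [hfi] using hs)
      (by simpa [hfj] using hp)
  exact ⟨_, compatible_iff.mpr ⟨_, _, isFrontier_qnode_ofFn hf, hm, rfl⟩,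
    sum_toFinset_append_between_append w hf hij
      (hm.nodup (nodup_flatten_ofFn_of_isFrontier hf hnd))⟩

end QNodeWeights

/-- **Lemma: `inner` at a q-node.** For a q-node `v` with children
`c_1, …, c_ℓ` (`ℓ ≥ 2`) in their given order, `inner(v) = max(x, y)` where
`x = max_i inner(c_i)` and
`y = max_{i<j} (border(c_i) + border(c_j) + Σ_{i<ℓ′<j} total(c_{ℓ′}))`. -/
theorem inner_qnode {U : Type} [DecidableEq U] (w : U → ℤ) (ℓ : ℕ) (hℓ : 2 ≤ ℓ)
    (c : Fin ℓ → PQTree U) (hp : Proper (qnode (List.ofFn c)))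
    (hnd : (leaves (qnode (List.ofFn c))).Nodup) :
    inner w (qnode (List.ofFn c)) =
      max
        (sSup {z : ℤ | ∃ i : Fin ℓ, z = inner w (c i)})
        (sSup {z : ℤ | ∃ i j : Fin ℓ, i < j ∧ z = border w (c i) + border w (c j) +
          ∑ t ∈ Finset.univ.filter (fun t : Fin ℓ => i < t ∧ t < j), total w (c t)}) := by
  simp only [Finset.filter_lt_lt_eq_Ioo]
  have hX : BddAbove {z : ℤ | ∃ i : Fin ℓ, z = inner w (c i)} :=
    (Set.finite_range fun i => inner w (c i)).bddAbove.mono (by rintro _ ⟨i, rfl⟩; exact ⟨i, rfl⟩)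
  have hY : BddAbove {z : ℤ | ∃ i j : Fin ℓ, i < j ∧ z = border w (c i) + border w (c j) +
      ∑ t ∈ Finset.Ioo i j, total w (c t)} :=
    (Set.finite_range fun ij : Fin ℓ × Fin ℓ => border w (c ij.1) + border w (c ij.2) +
      ∑ t ∈ Finset.Ioo ij.1 ij.2, total w (c t)).bddAbove.mono
      (by rintro _ ⟨i, j, -, rfl⟩; exact ⟨(i, j), rfl⟩)
  apply le_antisymm
  · refine inner_le w fun S hS => ?_
    rcases hS.qnode_ofFn_cases w hnd with rfl | ⟨i, hi⟩ | ⟨i, j, hij, Si, Sj, hi, hj, hsum⟩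
    · exact le_max_of_le_left ((inner_nonneg w).trans (le_csSup hX ⟨⟨0, by omega⟩, rfl⟩))
    · exact le_max_of_le_left ((le_inner w hi).trans (le_csSup hX ⟨i, rfl⟩))
    · refine le_max_of_le_right (le_csSup_of_le hY ⟨i, j, hij, rfl⟩ ?_)
      rw [hsum]
      gcongr
      exacts [le_border w hi, le_border w hj]
  · refine max_le (csSup_le ⟨_, ⟨0, by omega⟩, rfl⟩ ?_)
      (csSup_le ⟨_, ⟨0, by omega⟩, ⟨1, by omega⟩, Fin.mk_lt_mk.mpr one_pos, rfl⟩ ?_)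
    · rintro _ ⟨i, rfl⟩
      exact inner_le w fun S hS => le_inner w hS.qnode_ofFn
    · rintro _ ⟨i, j, hij, rfl⟩
      obtain ⟨Si, hSi, hi⟩ := exists_borderCompatible_sum_eq_border w (hp.of_qnode_ofFn i)
      obtain ⟨Sj, hSj, hj⟩ := exists_borderCompatible_sum_eq_border w (hp.of_qnode_ofFn j)
      obtain ⟨S, hS, hsum⟩ := exists_compatible_qnode_ofFn_sum_eq w hnd hij hSi hSj
      rw [← hi, ← hj, ← hsum]
      exact le_inner w hS

end PQTree
end
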